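/- arXiv:2012.15542 — 3 statements merged into one kernel-verified Lean document; each statement's English description precedes it below -/
import Mathlib

section
/- Let (V,E) be a directed tree and λ, μ weights on V. The following are equivalent: (i) B_λ is a bounded operator on ℓ^∞(V,μ); (ii) B_λ is a bounded operator on c₀(V,μ); (iii) sup_{v∈V} |μ_v| ∑_{u∈Chi(v)} |λ_u/μ_u| < ∞. In that case ‖B_λ‖ equals this supremum on both spaces. -/
open scoped ENNReal
open Filter

/-- Iterated parent map of a partially defined parent function. -/
def parIter {V : Type*} (par : V → Option V) : ℕ → V → Option V
  | 0, v => some v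
  | n + 1, v => (par v).bind (parIter par n)

/-- A directed tree: each vertex has at most one parent (the map `par`),
the graph is connected (any two vertices have a common ancestor), and has no cycles. -/
structure DirTree (V : Type*) : Type _ where
  par : V → Option V
  connected : ∀ u v : V, ∃ m n : ℕ, ∃ w : V,
    parIter par m u = some w ∧ parIter par n v = some w
  acyclic : ∀ (v : V) (n : ℕ), parIter par (n + 1) v ≠ some v

namespace DirTree

variable {V : Type*} (t : DirTree V)

/-- The set of children of a vertex. -/
def children (v : V) : Set V := {u | t.par u = some v}

/-- `desc n v` is `Chi^n(v)`, the set of `n`-th generation descendants of `v`. -/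
def desc (n : ℕ) (v : V) : Set V := {u | parIter t.par n u = some v}

def IsRoot (v : V) : Prop := t.par v = none

def Rooted : Prop := ∃ v, t.IsRoot v

def Unrooted : Prop := ∀ v : V, t.par v ≠ none

/-- The tree has no leaves: every vertex has a child. -/
def Leafless : Prop := ∀ v : V, ∃ u, t.par u = some v

variable {𝕂 : Type*} [RCLike 𝕂]

/-- The weighted backward shift `B_λ`: `(B_λ f)(v) = ∑_{u ∈ Chi(v)} λ_u f(u)`. -/
noncomputable def bshift (lam : V → 𝕂) (f : V → 𝕂) : V → 𝕂 :=
  fun v => ∑' u : t.children v, lam u * f u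

/-- The weighted forward shift `S_λ`: `(S_λ f)(v) = λ_v f(par v)` for `v ≠ root`, `0` at the root. -/
noncomputable def fshift (lam : V → 𝕂) (f : V → 𝕂) : V → 𝕂 :=
  fun v => (t.par v).elim 0 (fun w => lam v * f w)

/-- `wprod lam n u = λ(par^n(u) → u)`, the product of the weights along the branch
from `par^n(u)` down to `u`. -/
noncomputable def wprod (lam : V → 𝕂) (n : ℕ) (u : V) : 𝕂 :=
  ∏ k ∈ Finset.range n, ((parIter t.par k u).elim 1 lam)

end DirTree

/-- The `ℓ^p(V,μ)`-norm (with values in `ℝ≥0∞`): for `p = ∞` the weighted sup norm,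
otherwise `(∑_v ‖f(v) μ_v‖^p)^{1/p}`. -/
noncomputable def enormW {V 𝕂 : Type*} [RCLike 𝕂] (μ : V → 𝕂) (p : ℝ≥0∞) (f : V → 𝕂) :
    ℝ≥0∞ :=
  if p = ∞ then ⨆ v, (‖μ v * f v‖₊ : ℝ≥0∞)
  else (∑' v, (‖μ v * f v‖₊ : ℝ≥0∞) ^ p.toReal) ^ (1 / p.toReal)

/-- Membership in `ℓ^p(V,μ)`. -/
def MemWLp {V 𝕂 : Type*} [RCLike 𝕂] (μ : V → 𝕂) (p : ℝ≥0∞) (f : V → 𝕂) : Prop :=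
  enormW μ p f ≠ ∞

/-- Membership in `c₀(V,μ)`: the weighted function vanishes at infinity. -/
def MemC0 {V 𝕂 : Type*} [RCLike 𝕂] (μ : V → 𝕂) (f : V → 𝕂) : Prop :=
  Tendsto (fun v => ‖μ v * f v‖) cofinite (nhds 0)

/-- `T` is a bounded operator with respect to the norm `nrm`. -/
def BoundedOn {V 𝕂 : Type*} [RCLike 𝕂] (T : (V → 𝕂) → (V → 𝕂))
    (nrm : (V → 𝕂) → ℝ≥0∞) : Prop :=
  ∃ C : ℝ≥0∞, C ≠ ∞ ∧ ∀ f, nrm (T f) ≤ C * nrm f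

/-- The operator norm of `T` with respect to the norm `nrm`. -/
noncomputable def opNorm {V 𝕂 : Type*} [RCLike 𝕂] (T : (V → 𝕂) → (V → 𝕂))
    (nrm : (V → 𝕂) → ℝ≥0∞) : ℝ≥0∞ :=
  sInf {C : ℝ≥0∞ | ∀ f, nrm (T f) ≤ C * nrm f}

/-- `T` is hypercyclic on the space `{f | mem f}` with metric induced by `nrm`:
some `f` in the space has dense orbit. -/
def HypercyclicOn {V 𝕂 : Type*} [RCLike 𝕂] (T : (V → 𝕂) → (V → 𝕂))
    (mem : (V → 𝕂) → Prop) (nrm : (V → 𝕂) → ℝ≥0∞) : Prop :=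
  ∃ f, mem f ∧ ∀ g, mem g → ∀ ε : ℝ≥0∞, 0 < ε → ∃ n : ℕ, nrm (T^[n] f - g) < ε

/-- `T` is weakly mixing: `T ⊕ T` is hypercyclic on the product. -/
def WeaklyMixingOn {V 𝕂 : Type*} [RCLike 𝕂] (T : (V → 𝕂) → (V → 𝕂))
    (mem : (V → 𝕂) → Prop) (nrm : (V → 𝕂) → ℝ≥0∞) : Prop :=
  ∃ f₁ f₂, mem f₁ ∧ mem f₂ ∧ ∀ g₁ g₂, mem g₁ → mem g₂ → ∀ ε : ℝ≥0∞, 0 < ε →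
    ∃ n : ℕ, nrm (T^[n] f₁ - g₁) < ε ∧ nrm (T^[n] f₂ - g₂) < ε

/-- `T` is (topologically) mixing on the space `{f | mem f}`. -/
def MixingOn {V 𝕂 : Type*} [RCLike 𝕂] (T : (V → 𝕂) → (V → 𝕂))
    (mem : (V → 𝕂) → Prop) (nrm : (V → 𝕂) → ℝ≥0∞) : Prop :=
  ∀ f g, mem f → mem g → ∀ ε : ℝ≥0∞, 0 < ε →
    ∃ N : ℕ, ∀ n ≥ N, ∃ h, mem h ∧ nrm (h - f) < ε ∧ nrm (T^[n] h - g) < ε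


/-- `B_λ` is a bounded operator on `c₀(V,μ)`. -/
def BoundedOnC0 {V 𝕂 : Type*} [RCLike 𝕂] (μ : V → 𝕂)
    (T : (V → 𝕂) → (V → 𝕂)) : Prop :=
  (∀ f, MemC0 μ f → MemC0 μ (T f)) ∧
  ∃ C : ℝ≥0∞, C ≠ ∞ ∧ ∀ f, MemC0 μ f → enormW μ ∞ (T f) ≤ C * enormW μ ∞ f

/-- The operator norm of `T` as an operator on `c₀(V,μ)`. -/
noncomputable def opNormC0 {V 𝕂 : Type*} [RCLike 𝕂] (μ : V → 𝕂)
    (T : (V → 𝕂) → (V → 𝕂)) : ℝ≥0∞ :=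
  sInf {C : ℝ≥0∞ | ∀ f, MemC0 μ f → enormW μ ∞ (T f) ≤ C * enormW μ ∞ f}

/-!
The pointwise estimate
`|μ_v (B_λ f)(v)| ≤ (|μ_v| ∑_{u ∈ Chi(v)} |λ_u / μ_u|) · sup_{u ∈ Chi(v)} |μ_u f(u)|`
gives `‖B_λ‖ ≤ M` on `ℓ^∞(V,μ)`, where `M` is the supremum over `v` of the bracket. Since every
vertex has at most one parent, the finitely many `u` with `|μ_u f(u)| ≥ δ` are children of finitely
many vertices, so the same estimate shows that `B_λ` maps `c₀(V,μ)` into itself when `M < ∞`. Conversely, for a finite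
set `F` of children of `v`, the function `u ↦ |λ_u| / (λ_u |μ_u|)` on `F` lies in the unit ball
of `c₀(V,μ)` and is mapped to `∑_{u ∈ F} |λ_u / μ_u|` at `v`, so every bound for `B_λ` on
`c₀(V,μ)` dominates `M`.
-/

section

variable {V 𝕂 : Type*} [RCLike 𝕂]

theorem RCLike.enorm_ofReal_of_nonneg {r : ℝ} (hr : 0 ≤ r) : ‖(r : 𝕂)‖ₑ = ENNReal.ofReal r := by
  rw [← ofReal_norm, RCLike.norm_of_nonneg hr]

theorem enormW_top (μ f : V → 𝕂) : enormW μ ∞ f = ⨆ v, ‖μ v * f v‖ₑ :=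
  if_pos rfl

theorem memC0_iff_tendsto_enorm {μ f : V → 𝕂} :
    MemC0 μ f ↔ Tendsto (fun v => ‖μ v * f v‖ₑ) cofinite (nhds 0) := by
  simp_rw [enorm_eq_nnnorm]
  rw [← ENNReal.coe_zero, ENNReal.tendsto_coe, ← NNReal.tendsto_coe, NNReal.coe_zero]
  rfl

theorem memC0_of_finite_support (μ : V → 𝕂) {f : V → 𝕂} (hf : (Function.support f).Finite) :
    MemC0 μ f := by
  refine tendsto_const_nhds.congr' ?_
  filter_upwards [hf.compl_mem_cofinite] with v hv
  simp [Function.notMem_support.1 hv]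

/-- With Lean's `x / 0 = 0`, `lam u * alignedIndicator lam μ s u = ‖lam u‖ / ‖μ u‖` on `s`
also when `lam u = 0`. -/
noncomputable def alignedIndicator (lam μ : V → 𝕂) (s : Set V) : V → 𝕂 :=
  s.indicator fun u => ((‖lam u‖ / ‖μ u‖ : ℝ) : 𝕂) / lam u

theorem enormW_alignedIndicator_le (lam μ : V → 𝕂) (s : Set V) :
    enormW μ ∞ (alignedIndicator lam μ s) ≤ 1 := by
  rw [enormW_top]
  refine iSup_le fun u => ?_
  rw [← ofReal_norm, ENNReal.ofReal_le_one]
  by_cases hu : u ∈ s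
  · rw [alignedIndicator, Set.indicator_of_mem hu, norm_mul, norm_div,
      RCLike.norm_of_nonneg (by positivity)]
    calc ‖μ u‖ * (‖lam u‖ / ‖μ u‖ / ‖lam u‖) = (‖μ u‖ / ‖μ u‖) * (‖lam u‖ / ‖lam u‖) := by ring
      _ ≤ 1 := mul_le_one₀ (div_self_le_one _) (by positivity) (div_self_le_one _)
  · simp [alignedIndicator, hu]

end

namespace DirTree

variable {V 𝕂 : Type*} [RCLike 𝕂] (t : DirTree V)

theorem eventually_forall_children {P : V → Prop} (hP : ∀ᶠ u in cofinite, P u) :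
    ∀ᶠ v in cofinite, ∀ u ∈ t.children v, P u := by
  have hpar : (some ⁻¹' (t.par '' {u | ¬ P u})).Finite :=
    ((eventually_cofinite.1 hP).image t.par).preimage (Option.some_injective V).injOn
  filter_upwards [hpar.compl_mem_cofinite] with v hv u hu
  by_contra hPu
  exact hv ⟨u, hPu, hu⟩

theorem bshift_alignedIndicator (lam μ : V → 𝕂) (v : V) (F : Finset (t.children v)) :
    t.bshift lam (alignedIndicator lam μ (Subtype.val '' (F : Set (t.children v)))) v =
      ((∑ u ∈ F, ‖lam u‖ / ‖μ u‖ : ℝ) : 𝕂) := by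
  rw [bshift, tsum_eq_sum (s := F), RCLike.ofReal_sum]
  · refine Finset.sum_congr rfl fun u hu => ?_
    rw [alignedIndicator, Set.indicator_of_mem (Set.mem_image_of_mem _ (Finset.mem_coe.2 hu))]
    exact mul_div_cancel_of_imp' fun h => by simp [h]
  · intro u hu
    rw [alignedIndicator, Set.indicator_of_notMem, mul_zero]
    rintro ⟨w, hw, hwu⟩
    exact hu (Subtype.ext hwu ▸ hw)

variable (lam μ : V → 𝕂)

noncomputable def rowWeight (v : V) : ℝ≥0∞ :=
  ‖μ v‖ₑ * ∑' u : t.children v, ‖lam u‖ₑ * ‖μ u‖ₑ⁻¹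

noncomputable def rowWeightSup : ℝ≥0∞ :=
  ⨆ v, t.rowWeight lam μ v

variable {t lam μ}

theorem enorm_mul_bshift_le (hμ : ∀ v, μ v ≠ 0) {f : V → 𝕂} {v : V} {b : ℝ≥0∞}
    (hb : ∀ u ∈ t.children v, ‖μ u * f u‖ₑ ≤ b) :
    ‖μ v * t.bshift lam f v‖ₑ ≤ t.rowWeight lam μ v * b := by
  have hterm (u : V) (hu : u ∈ t.children v) : ‖lam u * f u‖ₑ ≤ ‖lam u‖ₑ * ‖μ u‖ₑ⁻¹ * b := by
    rw [enorm_mul, mul_assoc]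
    refine mul_le_mul_right ?_ _
    rw [← ENNReal.mul_le_iff_le_inv (by simpa using hμ u) enorm_ne_top, ← enorm_mul]
    exact hb u hu
  calc ‖μ v * t.bshift lam f v‖ₑ
      ≤ ‖μ v‖ₑ * ∑' u : t.children v, ‖lam u * f u‖ₑ := by
        rw [enorm_mul]; exact mul_le_mul_right enorm_tsum_le_tsum_enorm _
    _ ≤ ‖μ v‖ₑ * ∑' u : t.children v, ‖lam u‖ₑ * ‖μ u‖ₑ⁻¹ * b := by
        gcongr with u; exact hterm u u.2
    _ = t.rowWeight lam μ v * b := by rw [ENNReal.tsum_mul_right, rowWeight, mul_assoc]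

theorem enormW_bshift_le (hμ : ∀ v, μ v ≠ 0) (f : V → 𝕂) :
    enormW μ ∞ (t.bshift lam f) ≤ t.rowWeightSup lam μ * enormW μ ∞ f := by
  rw [enormW_top, enormW_top]
  refine iSup_le fun v => ?_
  calc ‖μ v * t.bshift lam f v‖ₑ ≤ t.rowWeight lam μ v * ⨆ u, ‖μ u * f u‖ₑ :=
        enorm_mul_bshift_le hμ fun u _ => le_iSup (fun w => ‖μ w * f w‖ₑ) u
    _ ≤ t.rowWeightSup lam μ * ⨆ u, ‖μ u * f u‖ₑ :=
        mul_le_mul_left (le_iSup (t.rowWeight lam μ) v) _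

theorem memC0_bshift (hμ : ∀ v, μ v ≠ 0) (hM : t.rowWeightSup lam μ ≠ ∞) {f : V → 𝕂}
    (hf : MemC0 μ f) : MemC0 μ (t.bshift lam f) := by
  rw [memC0_iff_tendsto_enorm] at hf ⊢
  refine ENNReal.tendsto_nhds_zero.2 fun ε hε => ?_
  have hδ : 0 < ε / t.rowWeightSup lam μ := ENNReal.div_pos_iff.2 ⟨hε.ne', hM⟩
  filter_upwards [t.eventually_forall_children (ENNReal.tendsto_nhds_zero.1 hf _ hδ)] with v hv
  calc ‖μ v * t.bshift lam f v‖ₑ ≤ t.rowWeight lam μ v * (ε / t.rowWeightSup lam μ) :=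
        enorm_mul_bshift_le hμ hv
    _ ≤ t.rowWeightSup lam μ * (ε / t.rowWeightSup lam μ) :=
        mul_le_mul_left (le_iSup (t.rowWeight lam μ) v) _
    _ ≤ ε := ENNReal.mul_div_le

theorem rowWeightSup_le_of_bound_c0 (hμ : ∀ v, μ v ≠ 0) {C : ℝ≥0∞}
    (hC : ∀ f, MemC0 μ f → enormW μ ∞ (t.bshift lam f) ≤ C * enormW μ ∞ f) :
    t.rowWeightSup lam μ ≤ C := by
  refine iSup_le fun v => ?_
  rw [rowWeight, ENNReal.tsum_eq_iSup_sum, ENNReal.mul_iSup]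
  refine iSup_le fun F => ?_
  set g := alignedIndicator lam μ (Subtype.val '' (F : Set (t.children v)))
  have hg : MemC0 μ g :=
    memC0_of_finite_support μ ((F.finite_toSet.image _).subset Set.support_indicator_subset)
  calc ‖μ v‖ₑ * ∑ u ∈ F, ‖lam u‖ₑ * ‖μ u‖ₑ⁻¹ = ‖μ v * t.bshift lam g v‖ₑ := by
        rw [bshift_alignedIndicator, enorm_mul, RCLike.enorm_ofReal_of_nonneg (by positivity),
          ENNReal.ofReal_sum_of_nonneg fun _ _ => by positivity]
        congr 1
        refine Finset.sum_congr rfl fun u _ => ?_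
        rw [ENNReal.ofReal_div_of_pos (norm_pos_iff.2 (hμ u)), ofReal_norm, ofReal_norm,
          div_eq_mul_inv]
    _ ≤ enormW μ ∞ (t.bshift lam g) := by
        rw [enormW_top]; exact le_iSup (fun w => ‖μ w * t.bshift lam g w‖ₑ) v
    _ ≤ C * enormW μ ∞ g := hC g hg
    _ ≤ C := mul_le_of_le_one_right' (enormW_alignedIndicator_le lam μ _)

end DirTree

theorem stmt6_general {V : Type*} {𝕂 : Type*} [RCLike 𝕂] (t : DirTree V)
    (lam μ : V → 𝕂) (hμ : ∀ v, μ v ≠ 0) :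
    (BoundedOn (t.bshift lam) (enormW μ ∞) ↔ BoundedOnC0 μ (t.bshift lam)) ∧
    (BoundedOn (t.bshift lam) (enormW μ ∞) ↔
      (⨆ v : V, (‖μ v‖₊ : ℝ≥0∞) *
          ∑' u : t.children v, (‖lam u.1‖₊ : ℝ≥0∞) * (‖μ u.1‖₊ : ℝ≥0∞)⁻¹) ≠ ∞) ∧
    (BoundedOn (t.bshift lam) (enormW μ ∞) →
      opNorm (t.bshift lam) (enormW μ ∞)
          = (⨆ v : V, (‖μ v‖₊ : ℝ≥0∞) *
              ∑' u : t.children v, (‖lam u.1‖₊ : ℝ≥0∞) * (‖μ u.1‖₊ : ℝ≥0∞)⁻¹) ∧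
      opNormC0 μ (t.bshift lam)
          = ⨆ v : V, (‖μ v‖₊ : ℝ≥0∞) *
              ∑' u : t.children v, (‖lam u.1‖₊ : ℝ≥0∞) * (‖μ u.1‖₊ : ℝ≥0∞)⁻¹) := by
  change _ ∧ (_ ↔ t.rowWeightSup lam μ ≠ ∞) ∧
    (_ → _ = t.rowWeightSup lam μ ∧ _ = t.rowWeightSup lam μ)
  have upper : ∀ f, enormW μ ∞ (t.bshift lam f) ≤ t.rowWeightSup lam μ * enormW μ ∞ f :=
    DirTree.enormW_bshift_le hμ
  have lower (C : ℝ≥0∞) (hC : ∀ f, MemC0 μ f → enormW μ ∞ (t.bshift lam f) ≤ C * enormW μ ∞ f) :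
      t.rowWeightSup lam μ ≤ C :=
    DirTree.rowWeightSup_le_of_bound_c0 hμ hC
  have bounded_iff : BoundedOn (t.bshift lam) (enormW μ ∞) ↔ t.rowWeightSup lam μ ≠ ∞ :=
    ⟨fun ⟨C, hC, h⟩ => ne_top_of_le_ne_top hC (lower C fun f _ => h f),
      fun hM => ⟨_, hM, upper⟩⟩
  have boundedC0_iff : BoundedOnC0 μ (t.bshift lam) ↔ t.rowWeightSup lam μ ≠ ∞ :=
    ⟨fun ⟨_, C, hC, h⟩ => ne_top_of_le_ne_top hC (lower C h),
      fun hM => ⟨fun _ => t.memC0_bshift hμ hM, _, hM, fun f _ => upper f⟩⟩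
  refine ⟨bounded_iff.trans boundedC0_iff.symm, bounded_iff, fun _ => ⟨?_, ?_⟩⟩
  · exact le_antisymm (sInf_le upper) (le_sInf fun C hC => lower C fun f _ => hC f)
  · exact le_antisymm (sInf_le fun f _ => upper f) (le_sInf fun C hC => lower C hC)

/-- `B_λ` is bounded on `ℓ^∞(V,μ)` iff it is bounded on `c₀(V,μ)` iff
`sup_v |μ_v| ∑_{u ∈ Chi(v)} |λ_u/μ_u| < ∞`; in that case `‖B_λ‖` equals this supremum
on both spaces. -/
theorem stmt6 {V : Type*} [Countable V] {𝕂 : Type*} [RCLike 𝕂] (t : DirTree V)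
    (lam μ : V → 𝕂) (hlam : ∀ v, lam v ≠ 0) (hμ : ∀ v, μ v ≠ 0) :
    (BoundedOn (t.bshift lam) (enormW μ ∞) ↔ BoundedOnC0 μ (t.bshift lam)) ∧
    (BoundedOn (t.bshift lam) (enormW μ ∞) ↔
      (⨆ v : V, (‖μ v‖₊ : ℝ≥0∞) *
          ∑' u : t.children v, (‖lam u.1‖₊ : ℝ≥0∞) * (‖μ u.1‖₊ : ℝ≥0∞)⁻¹) ≠ ∞) ∧
    (BoundedOn (t.bshift lam) (enormW μ ∞) →
      opNorm (t.bshift lam) (enormW μ ∞)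
          = (⨆ v : V, (‖μ v‖₊ : ℝ≥0∞) *
              ∑' u : t.children v, (‖lam u.1‖₊ : ℝ≥0∞) * (‖μ u.1‖₊ : ℝ≥0∞)⁻¹) ∧
      opNormC0 μ (t.bshift lam)
          = ⨆ v : V, (‖μ v‖₊ : ℝ≥0∞) *
              ∑' u : t.children v, (‖lam u.1‖₊ : ℝ≥0∞) * (‖μ u.1‖₊ : ℝ≥0∞)⁻¹) :=
  stmt6_general t lam μ hμ
end

section
/- Let (V,E) be a directed tree and λ, μ weights. If B_λ is a bounded operator on ℓ^p(V,μ) for some 1 ≤ p < ∞, then under the dual pairing ⟨f,g⟩ = ∑_{v∈V} f(v) conj(g(v)), the adjoint of B_λ is the weighted forward shift S_{conj(λ)} acting on ℓ^{p*}(V, 1/conj(μ)). -/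
open scoped ENNReal
open Filter

/-!
Testing the boundedness of `B_λ` on the function supported on `Chi(v)` that carries the phases
of `λ_u f(u)` gives `|μ_v| ∑_{u ∈ Chi(v)} |λ_u f(u)| ≤ C ‖f 1_{Chi(v)}‖_p`. As the sets `Chi(v)`
are disjoint, Hölder's inequality then makes the double series
`∑_v ∑_{u ∈ Chi(v)} λ_u f(u) conj(g(v))` absolutely convergent, and summing it over `u` first,
with `v = par u`, gives `∑_u f(u) conj((S_{conj λ} g)(u))`.
-/

open Function ComplexConjugate

namespace ENNReal

variable {ι κ : Type*} {p q : ℝ≥0∞} {a b : ι → ℝ≥0∞}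

noncomputable def ellpNorm (p : ℝ≥0∞) (a : ι → ℝ≥0∞) : ℝ≥0∞ :=
  if p = ∞ then ⨆ i, a i else (∑' i, a i ^ p.toReal) ^ (1 / p.toReal)

lemma ellpNorm_top (a : ι → ℝ≥0∞) : ellpNorm ∞ a = ⨆ i, a i := if_pos rfl

lemma ellpNorm_of_ne_top (hp : p ≠ ∞) (a : ι → ℝ≥0∞) :
    ellpNorm p a = (∑' i, a i ^ p.toReal) ^ (1 / p.toReal) := if_neg hp

lemma ellpNorm_one (a : ι → ℝ≥0∞) : ellpNorm 1 a = ∑' i, a i := by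
  simp [ellpNorm_of_ne_top one_ne_top]

lemma ellpNorm_rpow (hp₀ : p ≠ 0) (hp : p ≠ ∞) (a : ι → ℝ≥0∞) :
    ellpNorm p a ^ p.toReal = ∑' i, a i ^ p.toReal := by
  rw [ellpNorm_of_ne_top hp, ← rpow_mul, one_div_mul_cancel (toReal_pos hp₀ hp).ne', rpow_one]

lemma ellpNorm_mono (h : a ≤ b) : ellpNorm p a ≤ ellpNorm p b := by
  by_cases hp : p = ∞
  · subst hp
    simp only [ellpNorm_top]
    exact iSup_mono h
  · simp only [ellpNorm_of_ne_top hp]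
    gcongr with i
    exact h i

lemma le_ellpNorm (hp₀ : p ≠ 0) (a : ι → ℝ≥0∞) (i : ι) : a i ≤ ellpNorm p a := by
  by_cases hp : p = ∞
  · subst hp
    exact (le_iSup a i).trans_eq (ellpNorm_top a).symm
  · have hr := toReal_pos hp₀ hp
    rw [← rpow_le_rpow_iff hr, ellpNorm_rpow hp₀ hp]
    exact ENNReal.le_tsum (f := fun i => a i ^ p.toReal) i

lemma tsum_mul_le_iSup_mul_tsum (a b : ι → ℝ≥0∞) : ∑' i, a i * b i ≤ (⨆ i, a i) * ∑' i, b i :=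
  ENNReal.tsum_mul_left ▸ ENNReal.tsum_le_tsum fun i => mul_le_mul_left (le_iSup a i) _

lemma inner_le_Lp_mul_Lq_tsum {p q : ℝ} (hpq : p.HolderConjugate q) (a b : ι → ℝ≥0∞) :
    ∑' i, a i * b i ≤ (∑' i, a i ^ p) ^ (1 / p) * (∑' i, b i ^ q) ^ (1 / q) := by
  rw [ENNReal.tsum_eq_iSup_sum]
  refine iSup_le fun s => (inner_le_Lp_mul_Lq s a b hpq).trans ?_
  gcongr
  exacts [hpq.one_div_nonneg, ENNReal.sum_le_tsum s, hpq.symm.one_div_nonneg, ENNReal.sum_le_tsum s]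

lemma tsum_mul_le_ellpNorm_mul_ellpNorm [p.HolderConjugate q] (a b : ι → ℝ≥0∞) :
    ∑' i, a i * b i ≤ ellpNorm p a * ellpNorm q b := by
  by_cases hp : p = ∞
  · obtain rfl : q = 1 := (HolderConjugate.eq_top_iff_eq_one p q).mp hp
    rw [hp, ellpNorm_top, ellpNorm_one]
    exact tsum_mul_le_iSup_mul_tsum a b
  by_cases hq : q = ∞
  · obtain rfl : p = 1 := (HolderConjugate.eq_top_iff_eq_one q p).mp hq
    rw [hq, ellpNorm_top, ellpNorm_one, mul_comm]
    simpa only [mul_comm (a _)] using tsum_mul_le_iSup_mul_tsum b a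
  rw [ellpNorm_of_ne_top hp, ellpNorm_of_ne_top hq]
  exact inner_le_Lp_mul_Lq_tsum (HolderConjugate.toReal_of_ne_top hp hq) a b

lemma tsum_indicator_le_of_pairwise_disjoint {S : κ → Set ι} (hS : Pairwise (Disjoint on S))
    (a : ι → ℝ≥0∞) (i : ι) : ∑' j, (S j).indicator a i ≤ a i := by
  by_cases hi : ∃ j, i ∈ S j
  · obtain ⟨j, hj⟩ := hi
    rw [tsum_eq_single j fun k hk => Set.indicator_of_notMem
      (Set.disjoint_left.mp (hS hk.symm) hj) a]
    exact Set.indicator_le_self _ _ _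
  · push Not at hi
    simp [Set.indicator_of_notMem (hi _)]

lemma ellpNorm_ellpNorm_indicator_le (hp₀ : p ≠ 0) {S : κ → Set ι}
    (hS : Pairwise (Disjoint on S)) (a : ι → ℝ≥0∞) :
    ellpNorm p (fun j => ellpNorm p ((S j).indicator a)) ≤ ellpNorm p a := by
  by_cases hp : p = ∞
  · subst hp
    exact (ellpNorm_top _).trans_le <| iSup_le fun j => ellpNorm_mono (Set.indicator_le_self _ _)
  have hr := toReal_pos hp₀ hp
  have hpow (j : κ) (i : ι) :
      (S j).indicator a i ^ p.toReal = (S j).indicator (fun i => a i ^ p.toReal) i := by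
    by_cases hi : i ∈ S j <;> simp [hi, zero_rpow_of_pos hr]
  rw [← rpow_le_rpow_iff hr, ellpNorm_rpow hp₀ hp, ellpNorm_rpow hp₀ hp]
  simp only [ellpNorm_rpow hp₀ hp, hpow]
  rw [ENNReal.tsum_comm]
  exact ENNReal.tsum_le_tsum fun i => tsum_indicator_le_of_pairwise_disjoint hS _ i

end ENNReal

section WeightedNorm

variable {V 𝕂 : Type*} [RCLike 𝕂] {μ : V → 𝕂} {p : ℝ≥0∞}

lemma enormW_eq_ellpNorm (μ : V → 𝕂) (p : ℝ≥0∞) (f : V → 𝕂) :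
    enormW μ p f = ENNReal.ellpNorm p (fun v => ‖μ v * f v‖ₑ) := rfl

lemma enormW_mono {f g : V → 𝕂} (h : ∀ v, ‖f v‖ ≤ ‖g v‖) : enormW μ p f ≤ enormW μ p g := by
  simp only [enormW_eq_ellpNorm]
  refine ENNReal.ellpNorm_mono fun v => ?_
  simp only [enorm_mul]
  gcongr
  exact enorm_le_iff_norm_le.mpr (h v)

lemma enorm_mul_le_enormW (hp₀ : p ≠ 0) (f : V → 𝕂) (v : V) : ‖μ v * f v‖ₑ ≤ enormW μ p f :=
  ENNReal.le_ellpNorm hp₀ (fun v => ‖μ v * f v‖ₑ) v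

lemma enormW_indicator (S : Set V) (f : V → 𝕂) :
    enormW μ p (S.indicator f) = ENNReal.ellpNorm p (S.indicator fun v => ‖μ v * f v‖ₑ) := by
  rw [enormW_eq_ellpNorm]
  congr 1
  ext v
  by_cases hv : v ∈ S <;> simp [hv]

end WeightedNorm

namespace RCLike

variable {𝕂 : Type*} [RCLike 𝕂]

lemma mul_conj_div_norm (z : 𝕂) : z * (conj z / ‖z‖) = ‖z‖ := by
  rcases eq_or_ne z 0 with rfl | hz
  · simp
  rw [mul_div_assoc', mul_conj, sq,
    mul_div_cancel_right₀ _ (RCLike.ofReal_ne_zero.mpr (norm_ne_zero_iff.mpr hz))]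

lemma norm_conj_div_norm_le_one (z : 𝕂) : ‖conj z / ‖z‖‖ ≤ 1 := by
  rw [norm_div, norm_conj, norm_ofReal, abs_norm]
  exact div_self_le_one _

end RCLike

open ENNReal

namespace DirTree

variable {V : Type*} (t : DirTree V)

lemma pairwise_disjoint_children : Pairwise (Disjoint on t.children) := fun _ _ hvw =>
  Set.disjoint_left.mpr fun _ hv hw => hvw (Option.some_injective _ (hv.symm.trans hw))

lemma sigma_children_snd_injective : Injective fun x : Σ v, t.children v => (x.2 : V) := by
  rintro ⟨v, u, hv⟩ ⟨w, u', hw⟩ (rfl : u = u')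
  obtain rfl : v = w := Option.some_injective _ (hv.symm.trans hw)
  rfl

lemma tsum_sigma_children {α : Type*} [AddCommMonoid α] [TopologicalSpace α] (h : V → α)
    (hroot : ∀ u, t.IsRoot u → h u = 0) : ∑' x : Σ v, t.children v, h x.2 = ∑' u, h u := by
  refine t.sigma_children_snd_injective.tsum_eq fun u hu => ?_
  obtain ⟨v, hv⟩ := Option.ne_none_iff_exists'.mp fun hroot' => hu (hroot u hroot')
  exact ⟨⟨v, u, hv⟩, rfl⟩

variable {𝕂 : Type*} [RCLike 𝕂] {lam μ : V → 𝕂} {p q C : ℝ≥0∞}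

lemma enorm_mul_sum_le_of_subset_children
    (hC : ∀ f, enormW μ p (t.bshift lam f) ≤ C * enormW μ p f) (hp₀ : p ≠ 0) (f : V → 𝕂)
    {v : V} {s : Finset V} (hs : ↑s ⊆ t.children v) :
    ‖μ v‖ₑ * ∑ u ∈ s, ‖lam u * f u‖ₑ ≤ C * enormW μ p ((t.children v).indicator f) := by
  set F : V → 𝕂 := (s : Set V).indicator
    fun u => conj (lam u * f u) / ‖lam u * f u‖ * f u with hF
  have hBF : t.bshift lam F v = ∑ u ∈ s, (‖lam u * f u‖ : 𝕂) := by
    have hsupp : (t.children v).indicator (fun u => lam u * F u)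
        = (s : Set V).indicator fun u => (‖lam u * f u‖ : 𝕂) := by
      ext u
      by_cases hu : u ∈ s
      · simp only [hF, Set.indicator_of_mem (hs hu), Set.indicator_of_mem (Finset.mem_coe.mpr hu)]
        linear_combination RCLike.mul_conj_div_norm (lam u * f u)
      · simp [hF, hu]
    rw [bshift, tsum_subtype (t.children v) (fun u => lam u * F u), hsupp]
    exact (tsum_subtype (s : Set V) _).symm.trans
      (Finset.tsum_subtype' s fun u => (‖lam u * f u‖ : 𝕂))
  have hFle (u : V) : ‖F u‖ ≤ ‖(t.children v).indicator f u‖ := by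
    by_cases hu : u ∈ s
    · simp only [hF, Set.indicator_of_mem (hs hu), Set.indicator_of_mem (Finset.mem_coe.mpr hu)]
      exact (norm_mul _ _).trans_le
        (mul_le_of_le_one_left (norm_nonneg _) (RCLike.norm_conj_div_norm_le_one _))
    · simp [hF, hu]
  calc ‖μ v‖ₑ * ∑ u ∈ s, ‖lam u * f u‖ₑ = ‖μ v * t.bshift lam F v‖ₑ := by
        rw [enorm_mul, hBF]
        congr 1
        rw [← RCLike.ofReal_sum, ← ofReal_norm, RCLike.norm_ofReal,
          abs_of_nonneg (Finset.sum_nonneg fun _ _ => norm_nonneg _),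
          ENNReal.ofReal_sum_of_nonneg fun _ _ => norm_nonneg _]
        simp only [ofReal_norm]
    _ ≤ enormW μ p (t.bshift lam F) := enorm_mul_le_enormW hp₀ _ v
    _ ≤ C * enormW μ p F := hC F
    _ ≤ C * enormW μ p ((t.children v).indicator f) := by gcongr; exact enormW_mono hFle

lemma enorm_mul_tsum_children_le
    (hC : ∀ f, enormW μ p (t.bshift lam f) ≤ C * enormW μ p f) (hp₀ : p ≠ 0) (f : V → 𝕂)
    (v : V) :
    ‖μ v‖ₑ * ∑' u : t.children v, ‖lam u * f u‖ₑ
      ≤ C * enormW μ p ((t.children v).indicator f) := by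
  classical
  rw [tsum_subtype (t.children v) fun u => ‖lam u * f u‖ₑ, ENNReal.tsum_eq_iSup_sum,
    ENNReal.mul_iSup]
  refine iSup_le fun s => ?_
  rw [Finset.sum_indicator_eq_sum_filter]
  exact t.enorm_mul_sum_le_of_subset_children hC hp₀ f fun u hu => (Finset.mem_filter.mp hu).2

lemma tsum_enorm_pairing_le (hμ : ∀ v, μ v ≠ 0)
    (hC : ∀ f, enormW μ p (t.bshift lam f) ≤ C * enormW μ p f) [p.HolderConjugate q]
    (f g : V → 𝕂) :
    ∑' x : Σ v, t.children v, ‖lam x.2 * f x.2 * conj (g x.1)‖ₑ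
      ≤ C * (enormW (fun v => (conj (μ v))⁻¹) q g * enormW μ p f) := by
  have hg (v : V) : ‖g v‖ₑ = ‖(conj (μ v))⁻¹ * g v‖ₑ * ‖μ v‖ₑ := by
    rw [enorm_mul, enorm_inv (by simpa using hμ v), RCLike.enorm_conj, mul_comm, ← mul_assoc,
      ENNReal.mul_inv_cancel (by simpa using hμ v) enorm_ne_top, one_mul]
  calc ∑' x : Σ v, t.children v, ‖lam x.2 * f x.2 * conj (g x.1)‖ₑ
      = ∑' v, ‖(conj (μ v))⁻¹ * g v‖ₑ * (‖μ v‖ₑ * ∑' u : t.children v, ‖lam u * f u‖ₑ) := by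
        rw [ENNReal.tsum_sigma']
        refine tsum_congr fun v => ?_
        rw [← mul_assoc, ← hg, ← ENNReal.tsum_mul_left]
        refine tsum_congr fun u => ?_
        rw [enorm_mul, RCLike.enorm_conj, mul_comm]
    _ ≤ ∑' v, ‖(conj (μ v))⁻¹ * g v‖ₑ * (C * enormW μ p ((t.children v).indicator f)) := by
        refine ENNReal.tsum_le_tsum fun v => mul_le_mul_right ?_ _
        exact t.enorm_mul_tsum_children_le hC (HolderConjugate.ne_zero p q) f v
    _ = C * ∑' v, ‖(conj (μ v))⁻¹ * g v‖ₑ * enormW μ p ((t.children v).indicator f) := by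
        rw [← ENNReal.tsum_mul_left]
        exact tsum_congr fun v => mul_left_comm _ _ _
    _ ≤ C * (enormW (fun v => (conj (μ v))⁻¹) q g * enormW μ p f) := by
        refine mul_le_mul_right
          ((ENNReal.tsum_mul_le_ellpNorm_mul_ellpNorm (p := q) (q := p) _ _).trans ?_) C
        rw [← enormW_eq_ellpNorm]
        gcongr
        simp only [enormW_indicator]
        exact ENNReal.ellpNorm_ellpNorm_indicator_le (HolderConjugate.ne_zero p q)
          t.pairwise_disjoint_children _

lemma tsum_bshift_mul_conj_eq {lam f g : V → 𝕂}
    (hsum : Summable fun x : Σ v, t.children v => lam x.2 * f x.2 * conj (g x.1)) :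
    ∑' v, t.bshift lam f v * conj (g v)
      = ∑' v, f v * conj (t.fshift (fun u => conj (lam u)) g v) := by
  calc ∑' v, t.bshift lam f v * conj (g v)
      = ∑' v, ∑' u : t.children v, lam u * f u * conj (g v) :=
        tsum_congr fun v => tsum_mul_right.symm
    _ = ∑' x : Σ v, t.children v, lam x.2 * f x.2 * conj (g x.1) := hsum.tsum_sigma.symm
    _ = ∑' x : Σ v, t.children v, f x.2 * conj (t.fshift (fun u => conj (lam u)) g x.2) := by
        refine tsum_congr fun ⟨v, u, hu⟩ => ?_
        simp only [fshift, show t.par u = some v from hu, Option.elim_some, map_mul,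
          RCLike.conj_conj]
        ring
    _ = ∑' v, f v * conj (t.fshift (fun u => conj (lam u)) g v) :=
        t.tsum_sigma_children (fun v => f v * conj (t.fshift (fun u => conj (lam u)) g v))
          fun u hu => by simp [fshift, show t.par u = none from hu]

end DirTree

theorem stmt7_general {V : Type*} {𝕂 : Type*} [RCLike 𝕂] (t : DirTree V)
    (lam μ : V → 𝕂) (hμ : ∀ v, μ v ≠ 0)
    (p q : ℝ≥0∞) (hpq : 1 / p + 1 / q = 1)
    (hbd : BoundedOn (t.bshift lam) (enormW μ p)) :
    ∀ f g : V → 𝕂, MemWLp μ p f →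
      MemWLp (fun v => (starRingEnd 𝕂 (μ v))⁻¹) q g →
      ∑' v, t.bshift lam f v * starRingEnd 𝕂 (g v)
        = ∑' v, f v * starRingEnd 𝕂
            (t.fshift (fun u => starRingEnd 𝕂 (lam u)) g v) := by
  intro f g hf hg
  obtain ⟨C, hC, hbound⟩ := hbd
  have : p.HolderConjugate q := ENNReal.holderConjugate_iff.mpr (by simpa only [one_div] using hpq)
  refine t.tsum_bshift_mul_conj_eq (Summable.of_enorm (ne_top_of_le_ne_top ?_
    (t.tsum_enorm_pairing_le (q := q) hμ hbound f g)))
  exact ENNReal.mul_ne_top hC (ENNReal.mul_ne_top hg hf)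

/-- if `B_λ` is bounded on `ℓ^p(V,μ)`, `1 ≤ p < ∞`, then under the dual
pairing `⟨f,g⟩ = ∑_v f(v) conj(g(v))`, the adjoint of `B_λ` is the weighted forward
shift `S_{conj(λ)}` acting on `ℓ^{p*}(V, 1/conj(μ))`. -/
theorem stmt7 {V : Type*} [Countable V] {𝕂 : Type*} [RCLike 𝕂] (t : DirTree V)
    (lam μ : V → 𝕂) (hlam : ∀ v, lam v ≠ 0) (hμ : ∀ v, μ v ≠ 0)
    (p q : ℝ≥0∞) (hp : 1 ≤ p) (hp' : p ≠ ∞) (hpq : 1 / p + 1 / q = 1)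
    (hbd : BoundedOn (t.bshift lam) (enormW μ p)) :
    ∀ f g : V → 𝕂, MemWLp μ p f →
      MemWLp (fun v => (starRingEnd 𝕂 (μ v))⁻¹) q g →
      ∑' v, t.bshift lam f v * starRingEnd 𝕂 (g v)
        = ∑' v, f v * starRingEnd 𝕂
            (t.fshift (fun u => starRingEnd 𝕂 (lam u)) g v) :=
  stmt7_general t lam μ hμ p q hpq hbd
end

section
/- Let (V,E) be a rooted, leafless directed tree and λ ∈ 𝕂 nonzero. The Rolewicz operator λB is a bounded hypercyclic operator on ℓ¹(V) if and only if |λ| > 1, and in that case it is mixing. -/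
open scoped ENNReal
open Filter

/-!
For `|λ| > 1` the operator `T = λB` on `ℓ¹(V)` satisfies the hypercyclicity criterion. Every vertex
lies at finite depth below the root, so `Tⁿ` eventually kills each finitely supported vector. And
choosing one child `σ v` of every vertex (the tree is leafless), the map `δ_v ↦ λ⁻¹ δ_{σ v}` is a
right inverse `S` of `T` with `‖S‖ = |λ|⁻¹ < 1`, so `Sⁿ → 0`. Approximating `x` by a finitely
supported `x'` and taking `x' + Sⁿ y`, which `Tⁿ` sends near `y`, shows that `T` is mixing. A mixing
operator is topologically transitive, and on the separable Banach space `ℓ¹(V)` Birkhoff's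
transitivity theorem (a Baire category argument) gives a dense orbit.

For `|λ| ≤ 1` we have `‖T‖ ≤ 1`, so every orbit is bounded and cannot be dense.
-/

open Topology TopologicalSpace

section Dynamics

variable {X : Type*}

def IsTopologicallyTransitive [TopologicalSpace X] (T : X → X) : Prop :=
  ∀ U W : Set X, IsOpen U → IsOpen W → U.Nonempty → W.Nonempty → ∃ n, (U ∩ T^[n] ⁻¹' W).Nonempty

theorem IsTopologicallyTransitive.exists_denseRange_iterate [TopologicalSpace X] [BaireSpace X]
    [SecondCountableTopology X] [Nonempty X] {T : X → X} (hT : Continuous T)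
    (htrans : IsTopologicallyTransitive T) : ∃ x, DenseRange fun n => T^[n] x := by
  obtain ⟨b, hbc, hb0, hb⟩ := exists_countable_basis X
  have hopen : ∀ W ∈ b, IsOpen (⋃ n, T^[n] ⁻¹' W) := fun W hW =>
    isOpen_iUnion fun n => (hb.isOpen hW).preimage (hT.iterate n)
  have hdense : ∀ W ∈ b, Dense (⋃ n, T^[n] ⁻¹' W) := fun W hW =>
    dense_iff_inter_open.mpr fun U hU hUne => by
      obtain ⟨n, x, hxU, hxW⟩ := htrans U W hU (hb.isOpen hW) hUne
        (Set.nonempty_iff_ne_empty.mpr fun h => hb0 (h ▸ hW))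
      exact ⟨x, hxU, Set.mem_iUnion_of_mem n hxW⟩
  obtain ⟨x, hx⟩ := (dense_biInter_of_isOpen hopen hbc hdense).nonempty
  refine ⟨x, hb.dense_iff.mpr fun W hW _ => ?_⟩
  obtain ⟨n, hn⟩ := Set.mem_iUnion.mp (Set.mem_iInter₂.mp hx W hW)
  exact ⟨_, hn, n, rfl⟩

theorem isTopologicallyTransitive_of_exists_dist_lt [PseudoMetricSpace X] {T : X → X}
    (h : ∀ x y : X, ∀ ε > 0, ∃ n, ∃ z, dist z x < ε ∧ dist (T^[n] z) y < ε) :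
    IsTopologicallyTransitive T := by
  rintro U W hU hW ⟨x, hx⟩ ⟨y, hy⟩
  obtain ⟨δ, hδ, hxU⟩ := Metric.isOpen_iff.mp hU x hx
  obtain ⟨η, hη, hyW⟩ := Metric.isOpen_iff.mp hW y hy
  obtain ⟨n, z, hzx, hzy⟩ := h x y (min δ η) (lt_min hδ hη)
  exact ⟨n, z, hxU (hzx.trans_le (min_le_left _ _)), hyW (hzy.trans_le (min_le_right _ _))⟩

theorem eventually_exists_dist_pow_apply_lt_of_rightInverse {𝕜 : Type*} [NormedField 𝕜]
    [SeminormedAddCommGroup X] [NormedSpace 𝕜 X] (T : X →L[𝕜] X) {S : X → X}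
    (hTS : ∀ y, T (S y) = y) (hS : ∀ y, Tendsto (fun n => S^[n] y) atTop (𝓝 0))
    (hD : Dense {x | Tendsto (fun n => (T ^ n) x) atTop (𝓝 0)}) (x y : X) {ε : ℝ} (hε : 0 < ε) :
    ∀ᶠ n in atTop, ∃ z, dist z x < ε ∧ dist ((T ^ n) z) y < ε := by
  have hTS_pow : ∀ n y, (T ^ n) (S^[n] y) = y := by
    intro n
    induction n with
    | zero => intro y; rfl
    | succ n ih =>
      intro y
      rw [pow_succ', Function.iterate_succ_apply]
      exact (congrArg T (ih (S y))).trans (hTS y)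
  obtain ⟨x', hx'x, hx'T⟩ := Metric.dense_iff.mp hD x (ε / 2) (half_pos hε)
  filter_upwards [Metric.tendsto_nhds.mp (hS y) (ε / 2) (half_pos hε),
    Metric.tendsto_nhds.mp hx'T ε hε] with n hSn hTn
  refine ⟨x' + S^[n] y, ?_, ?_⟩
  · calc dist (x' + S^[n] y) x ≤ dist x' x + ‖S^[n] y‖ := by
          rw [dist_eq_norm, dist_eq_norm, add_sub_right_comm]; exact norm_add_le _ _
      _ < ε / 2 + ε / 2 := add_lt_add (Metric.mem_ball.mp hx'x) (by rwa [← dist_zero_right])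
      _ = ε := add_halves ε
  · rwa [map_add, hTS_pow, dist_add_self_left, ← dist_zero_right]

theorem not_denseRange_pow_apply_of_norm_le_one {𝕜 : Type*} [NontriviallyNormedField 𝕜]
    [NormedAddCommGroup X] [NormedSpace 𝕜 X] [Nontrivial X] {T : X →L[𝕜] X} (hT : ‖T‖ ≤ 1)
    (x : X) : ¬DenseRange fun n : ℕ => (T ^ n) x := by
  have horbit : ∀ n, ‖(T ^ n) x‖ ≤ ‖x‖ := by
    intro n
    induction n with
    | zero => rfl
    | succ n ih =>
      rw [pow_succ']
      exact (T.le_opNorm _).trans (mul_le_of_le_one_left (norm_nonneg _) hT) |>.trans ih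
  have hbdd : Bornology.IsBounded (Set.range fun n : ℕ => (T ^ n) x) :=
    isBounded_iff_forall_norm_le.mpr ⟨‖x‖, by rintro _ ⟨n, rfl⟩; exact horbit n⟩
  intro hdense
  apply NormedSpace.unbounded_univ 𝕜 X
  rw [← hdense.closure_range]
  exact hbdd.closure

end Dynamics

section SequenceSpaces

variable {α E : Type*} [NormedAddCommGroup E]

theorem memℓp_one_iff_tsum_enorm_ne_top {f : α → E} : Memℓp f 1 ↔ ∑' i, ‖f i‖ₑ ≠ ∞ := by
  rw [memℓp_gen_iff (by norm_num), tsum_enorm_ne_top_iff_summable_norm]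
  simp

theorem tsum_enorm_extend_zero {β : Type*} {σ : α → β} (hσ : σ.Injective) (h : α → E) :
    ∑' u, ‖Function.extend σ h 0 u‖ₑ = ∑' v, ‖h v‖ₑ := by
  have : (fun u => ‖Function.extend σ h 0 u‖ₑ) = Function.extend σ (fun v => ‖h v‖ₑ) 0 := by
    funext u
    rw [Function.apply_extend (‖·‖ₑ)]
    simp only [Function.comp_def, Pi.zero_apply, enorm_zero]
    rfl
  rw [this, tsum_extend_zero hσ]

namespace lp

theorem summable_norm_one (f : lp (fun _ : α => E) 1) : Summable fun i => ‖f i‖ := by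
  simpa using (lp.memℓp f).summable (by norm_num)

theorem ofReal_norm_eq_tsum_enorm (f : lp (fun _ : α => E) 1) :
    ENNReal.ofReal ‖f‖ = ∑' i, ‖f i‖ₑ := by
  rw [lp.norm_eq_tsum_rpow (by norm_num)]
  simp only [ENNReal.toReal_one, Real.rpow_one, div_one]
  rw [ENNReal.ofReal_tsum_of_nonneg (fun _ => norm_nonneg _) (summable_norm_one f)]
  simp only [ofReal_norm]

theorem nontrivial_of_nonempty [Nonempty α] [Nontrivial E] (p : ℝ≥0∞) :
    Nontrivial (lp (fun _ : α => E) p) := by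
  classical
  obtain ⟨x, hx⟩ := exists_ne (0 : E)
  let i := Classical.arbitrary α
  exact ⟨lp.single p i x, 0, fun h => hx (by simpa using congrArg (fun f : lp _ p => f i) h)⟩

variable {F : α → Type*} [∀ i, NormedAddCommGroup (F i)] {p : ℝ≥0∞} [Fact (1 ≤ p)]

theorem separableSpace [Countable α] [∀ i, SeparableSpace (F i)] (hp : p ≠ ∞) :
    SeparableSpace (lp F p) := by
  classical
  have hsingle : IsSeparable (⋃ i, Set.range (lp.single (E := F) p i)) :=
    isSeparable_iUnion.mpr fun i => isSeparable_range (isometry_single i).continuous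
  refine isSeparable_univ_iff.mp ((hsingle.span (R := ℤ)).closure.mono fun f _ => ?_)
  exact mem_closure_of_tendsto (lp.hasSum_single hp f) <| Eventually.of_forall fun s =>
    Submodule.sum_mem _ fun i _ => Submodule.subset_span (Set.mem_iUnion_of_mem i ⟨f i, rfl⟩)

theorem dense_setOf_finite_support (hp : p ≠ ∞) :
    Dense {f : lp F p | ∃ s : Finset α, ∀ i ∉ s, f i = 0} := by
  classical
  exact fun f => mem_closure_of_tendsto (lp.hasSum_single hp f) <| Eventually.of_forall fun s =>
    ⟨s, fun i hi => by
      simp only [coeFn_sum, Finset.sum_apply, lp.single_apply]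
      exact Finset.sum_eq_zero fun j hj => Pi.single_eq_of_ne (ne_of_mem_of_not_mem hj hi).symm _⟩

end lp

end SequenceSpaces

theorem parIter_succ' {V : Type*} (par : V → Option V) (n : ℕ) (v : V) :
    parIter par (n + 1) v = (parIter par n v).bind par := by
  induction n generalizing v with
  | zero => simp [parIter]
  | succ n ih =>
    change (par v).bind (parIter par (n + 1)) = ((par v).bind (parIter par n)).bind par
    cases par v with
    | none => rfl
    | some w => exact ih w

theorem parIter_eq_none_of_le {V : Type*} {par : V → Option V} {v : V} {m n : ℕ} (hmn : m ≤ n)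
    (h : parIter par m v = none) : parIter par n v = none := by
  induction hmn with
  | refl => exact h
  | step _ ih => rw [parIter_succ', ih]; rfl

namespace DirTree

variable {V : Type*} {t : DirTree V}

theorem Rooted.exists_parIter_eq_none (ht : t.Rooted) (u : V) : ∃ m, parIter t.par m u = none := by
  obtain ⟨r, hr⟩ := ht
  obtain ⟨m, n, w, hm, hn⟩ := t.connected u r
  cases n with
  | zero =>
    cases hn
    exact ⟨m + 1, by rw [parIter_succ', hm]; exact hr⟩
  | succ n =>
    change (t.par r).bind (parIter t.par n) = some w at hn
    rw [hr] at hn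
    cases hn

theorem Rooted.exists_parIter_eq_none_finset (ht : t.Rooted) (s : Finset V) :
    ∃ m, ∀ u ∈ s, parIter t.par m u = none := by
  choose depth hdepth using ht.exists_parIter_eq_none
  exact ⟨s.sup depth, fun u hu => parIter_eq_none_of_le (Finset.le_sup hu) (hdepth u)⟩

variable (t) {𝕂 : Type*} [RCLike 𝕂]

theorem bshift_iterate_eq_zero (lam : V → 𝕂) {n : ℕ} {f : V → 𝕂}
    (hf : ∀ u, f u ≠ 0 → parIter t.par n u = none) : (t.bshift lam)^[n] f = 0 := by
  induction n generalizing f with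
  | zero =>
    funext u
    by_contra hu
    cases hf u hu
  | succ n ih =>
    rw [Function.iterate_succ_apply]
    refine ih fun v hv => ?_
    obtain ⟨⟨u, hu⟩, hfu⟩ : ∃ u : t.children v, lam u * f u ≠ 0 := by
      by_contra! h
      exact hv (by simp only [bshift, h, tsum_zero])
    have h := hf u (right_ne_zero_of_mul hfu)
    change (t.par u).bind (parIter t.par n) = none at h
    rwa [show t.par u = some v from hu] at h

theorem bshift_extend_zero {σ : V → V} (hσ : ∀ v, t.par (σ v) = some v) (lam h : V → 𝕂) :
    t.bshift lam (Function.extend σ h 0) = fun v => lam (σ v) * h v := by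
  have hinj : σ.Injective := fun a b hab => Option.some.inj ((hσ a).symm.trans (hab ▸ hσ b))
  funext v
  rw [bshift, tsum_eq_single ⟨σ v, hσ v⟩, hinj.extend_apply]
  rintro ⟨u, hu⟩ hne
  rw [Function.extend_apply' _ _ _ ?_, Pi.zero_apply, mul_zero]
  rintro ⟨w, rfl⟩
  cases Option.some.inj ((hσ w).symm.trans hu)
  exact hne rfl

theorem tsum_tsum_children_le (g : V → ℝ≥0∞) : ∑' v, ∑' u : t.children v, g u ≤ ∑' u, g u := by
  rw [← ENNReal.tsum_sigma' fun x : (Σ v, ↥(t.children v)) => g x.2]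
  refine ENNReal.tsum_comp_le_tsum_of_injective
    (f := fun x : (Σ v, ↥(t.children v)) => (x.2 : V)) ?_ g
  rintro ⟨v, u, hu⟩ ⟨v', u', hu'⟩ (rfl : u = u')
  cases Option.some.inj (hu.symm.trans hu')
  rfl

theorem tsum_enorm_bshift_le (lam f : V → 𝕂) :
    ∑' v, ‖t.bshift lam f v‖ₑ ≤ ∑' u, ‖lam u * f u‖ₑ :=
  (ENNReal.tsum_le_tsum fun _ => enorm_tsum_le_tsum_enorm).trans (t.tsum_tsum_children_le _)

theorem tsum_enorm_bshift_const_le (c : 𝕂) (f : V → 𝕂) :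
    ∑' v, ‖t.bshift (fun _ => c) f v‖ₑ ≤ ‖c‖ₑ * ∑' u, ‖f u‖ₑ := by
  simpa only [enorm_mul, ENNReal.tsum_mul_left] using t.tsum_enorm_bshift_le (fun _ => c) f

theorem bshift_add {lam f g : V → 𝕂} (hf : Summable fun u => lam u * f u)
    (hg : Summable fun u => lam u * g u) :
    t.bshift lam (f + g) = t.bshift lam f + t.bshift lam g := by
  funext v
  simp only [bshift, Pi.add_apply, mul_add]
  exact (hf.subtype _).tsum_add (hg.subtype _)

theorem bshift_smul (lam : V → 𝕂) (a : 𝕂) (f : V → 𝕂) :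
    t.bshift lam (a • f) = a • t.bshift lam f := by
  funext v
  simp only [bshift, Pi.smul_apply, smul_eq_mul, mul_left_comm _ a, tsum_mul_left]

theorem memℓp_bshift (c : 𝕂) {f : V → 𝕂} (hf : Memℓp f 1) :
    Memℓp (t.bshift (fun _ => c) f) 1 := by
  rw [memℓp_one_iff_tsum_enorm_ne_top] at hf ⊢
  exact ne_top_of_le_ne_top (ENNReal.mul_ne_top enorm_ne_top hf) (t.tsum_enorm_bshift_const_le c f)

noncomputable def bshiftCLM (c : 𝕂) : lp (fun _ : V => 𝕂) 1 →L[𝕂] lp (fun _ : V => 𝕂) 1 :=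
  LinearMap.mkContinuous
    { toFun := fun f => ⟨t.bshift (fun _ => c) f, t.memℓp_bshift c (lp.memℓp f)⟩
      map_add' := fun f g => by
        have hs : ∀ h : lp (fun _ : V => 𝕂) 1, Summable fun u => c * h u := fun h =>
          (lp.summable_norm_one h).of_norm.mul_left c
        ext1
        exact t.bshift_add (hs f) (hs g)
      map_smul' := fun a f => by
        ext1
        exact t.bshift_smul (fun _ => c) a f }
    ‖c‖ fun f => by
      rw [← ENNReal.ofReal_le_ofReal_iff (by positivity), ENNReal.ofReal_mul (norm_nonneg c),
        lp.ofReal_norm_eq_tsum_enorm, lp.ofReal_norm_eq_tsum_enorm, ofReal_norm]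
      exact t.tsum_enorm_bshift_const_le c f

theorem coe_bshiftCLM_apply (c : 𝕂) (f : lp (fun _ : V => 𝕂) 1) :
    ⇑(t.bshiftCLM c f) = t.bshift (fun _ => c) f :=
  rfl

theorem coe_bshiftCLM_pow_apply (c : 𝕂) (n : ℕ) (f : lp (fun _ : V => 𝕂) 1) :
    ⇑((t.bshiftCLM c ^ n) f) = (t.bshift fun _ => c)^[n] f := by
  induction n with
  | zero => rfl
  | succ n ih =>
    rw [pow_succ', Function.iterate_succ_apply', ← ih]
    exact t.coe_bshiftCLM_apply c _

theorem norm_bshiftCLM_le (c : 𝕂) : ‖t.bshiftCLM c‖ ≤ ‖c‖ :=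
  LinearMap.mkContinuous_norm_le _ (norm_nonneg c) _

theorem exists_rightInverse_bshiftCLM (hleafless : t.Leafless) {c : 𝕂} (hc : c ≠ 0) :
    ∃ S : lp (fun _ : V => 𝕂) 1 → lp (fun _ : V => 𝕂) 1,
      (∀ g, t.bshiftCLM c (S g) = g) ∧ ∀ g, ‖S g‖ = ‖c‖⁻¹ * ‖g‖ := by
  choose σ hσ using hleafless
  have hinj : σ.Injective := fun a b hab => Option.some.inj ((hσ a).symm.trans (hab ▸ hσ b))
  have hnorm : ∀ g : lp (fun _ : V => 𝕂) 1,
      ∑' u, ‖Function.extend σ (fun v => c⁻¹ * g v) 0 u‖ₑ = ‖c‖ₑ⁻¹ * ENNReal.ofReal ‖g‖ := by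
    intro g
    rw [tsum_enorm_extend_zero hinj, lp.ofReal_norm_eq_tsum_enorm, ← ENNReal.tsum_mul_left]
    simp only [enorm_mul, enorm_inv hc]
  have hmem : ∀ g : lp (fun _ : V => 𝕂) 1,
      Memℓp (Function.extend σ (fun v => c⁻¹ * g v) 0) 1 := fun g =>
    memℓp_one_iff_tsum_enorm_ne_top.mpr <| by
      rw [hnorm]
      exact ENNReal.mul_ne_top (by simpa using hc) ENNReal.ofReal_ne_top
  refine ⟨fun g => ⟨_, hmem g⟩, fun g => ?_, fun g => ?_⟩
  · ext1
    rw [coe_bshiftCLM_apply]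
    change t.bshift (fun _ => c) (Function.extend σ (fun v => c⁻¹ * g v) 0) = g
    rw [t.bshift_extend_zero hσ]
    funext v
    exact mul_inv_cancel_left₀ hc (g v)
  · rw [← ENNReal.ofReal_eq_ofReal_iff (norm_nonneg _) (by positivity),
      lp.ofReal_norm_eq_tsum_enorm, ENNReal.ofReal_mul (by positivity),
      ENNReal.ofReal_inv_of_pos (by simpa using hc), ofReal_norm]
    exact hnorm g

theorem tendsto_bshiftCLM_pow_apply_of_finite_support (hroot : t.Rooted) (c : 𝕂)
    {f : lp (fun _ : V => 𝕂) 1} (hf : ∃ s : Finset V, ∀ v ∉ s, f v = 0) :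
    Tendsto (fun n => (t.bshiftCLM c ^ n) f) atTop (𝓝 0) := by
  obtain ⟨s, hs⟩ := hf
  obtain ⟨m, hm⟩ := hroot.exists_parIter_eq_none_finset s
  refine tendsto_atTop_of_eventually_const (i₀ := m) fun n hn => ?_
  ext1
  rw [coe_bshiftCLM_pow_apply]
  refine t.bshift_iterate_eq_zero _ fun u hu => parIter_eq_none_of_le hn (hm u ?_)
  by_contra hus
  exact hu (hs u hus)

theorem eventually_exists_dist_bshiftCLM_pow_apply_lt (hroot : t.Rooted) (hleafless : t.Leafless)
    {c : 𝕂} (hc : 1 < ‖c‖) (f g : lp (fun _ : V => 𝕂) 1) {ε : ℝ} (hε : 0 < ε) :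
    ∀ᶠ n in atTop, ∃ h, dist h f < ε ∧ dist ((t.bshiftCLM c ^ n) h) g < ε := by
  obtain ⟨S, hTS, hS⟩ :=
    t.exists_rightInverse_bshiftCLM hleafless (norm_pos_iff.mp (one_pos.trans hc))
  have hS_pow : ∀ n y, ‖S^[n] y‖ = ‖c‖⁻¹ ^ n * ‖y‖ := by
    intro n
    induction n with
    | zero => simp
    | succ n ih => intro y; rw [Function.iterate_succ_apply', hS, ih, pow_succ', mul_assoc]
  refine eventually_exists_dist_pow_apply_lt_of_rightInverse _ hTS (fun y => ?_)
    ((lp.dense_setOf_finite_support ENNReal.one_ne_top).mono fun f hf =>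
      t.tendsto_bshiftCLM_pow_apply_of_finite_support hroot c hf) f g hε
  rw [tendsto_zero_iff_norm_tendsto_zero]
  simp only [hS_pow]
  simpa using (tendsto_pow_atTop_nhds_zero_of_lt_one (by positivity)
    (inv_lt_one_of_one_lt₀ hc)).mul_const ‖y‖

theorem exists_denseRange_bshiftCLM_pow_apply [Countable V] (hroot : t.Rooted)
    (hleafless : t.Leafless) {c : 𝕂} (hc : 1 < ‖c‖) :
    ∃ f, DenseRange fun n : ℕ => (t.bshiftCLM c ^ n) f := by
  have := lp.separableSpace (F := fun _ : V => 𝕂) ENNReal.one_ne_top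
  simp only [FunLike.coe_pow_eq_iterate]
  refine IsTopologicallyTransitive.exists_denseRange_iterate (t.bshiftCLM c).continuous
    (isTopologicallyTransitive_of_exists_dist_lt fun f g ε hε => ?_)
  simpa only [FunLike.coe_pow_eq_iterate] using
    (t.eventually_exists_dist_bshiftCLM_pow_apply_lt hroot hleafless hc f g hε).exists

end DirTree

section Transfer

variable {V 𝕂 : Type*} [RCLike 𝕂]

theorem enormW_one_one (f : V → 𝕂) : enormW (fun _ => (1 : 𝕂)) 1 f = ∑' v, ‖f v‖ₑ := by
  simp [enormW, enorm_eq_nnnorm]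

theorem memWLp_one_one_iff (f : V → 𝕂) : MemWLp (fun _ => (1 : 𝕂)) 1 f ↔ Memℓp f 1 := by
  rw [MemWLp, enormW_one_one, memℓp_one_iff_tsum_enorm_ne_top]

theorem exists_lp_coe_eq_of_memWLp {f : V → 𝕂} (hf : MemWLp (fun _ => (1 : 𝕂)) 1 f) :
    ∃ F : lp (fun _ : V => 𝕂) 1, ⇑F = f :=
  ⟨⟨f, (memWLp_one_one_iff f).mp hf⟩, rfl⟩

theorem enormW_one_one_sub (f g : lp (fun _ : V => 𝕂) 1) :
    enormW (fun _ => (1 : 𝕂)) 1 (⇑f - ⇑g) = ENNReal.ofReal (dist f g) := by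
  rw [dist_eq_norm, lp.ofReal_norm_eq_tsum_enorm, enormW_one_one]
  rfl

variable {B : (V → 𝕂) → V → 𝕂} {T : lp (fun _ : V => 𝕂) 1 →L[𝕂] lp (fun _ : V => 𝕂) 1}

theorem hypercyclicOn_iff_exists_denseRange (hT : ∀ n f, ⇑((T ^ n) f) = B^[n] f) :
    HypercyclicOn B (MemWLp (fun _ => (1 : 𝕂)) 1) (enormW (fun _ => (1 : 𝕂)) 1) ↔
      ∃ f, DenseRange fun n : ℕ => (T ^ n) f := by
  constructor
  · rintro ⟨_, hf, horbit⟩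
    obtain ⟨f, rfl⟩ := exists_lp_coe_eq_of_memWLp hf
    refine ⟨f, Metric.denseRange_iff.mpr fun g r hr => ?_⟩
    obtain ⟨n, hn⟩ := horbit g ((memWLp_one_one_iff _).mpr g.2) (ENNReal.ofReal r)
      (ENNReal.ofReal_pos.mpr hr)
    rw [← hT, enormW_one_one_sub, ENNReal.ofReal_lt_ofReal_iff hr] at hn
    exact ⟨n, by rwa [dist_comm]⟩
  · rintro ⟨f, hf⟩
    refine ⟨f, (memWLp_one_one_iff f).mpr f.2, fun _ hg ε hε => ?_⟩
    obtain ⟨g, rfl⟩ := exists_lp_coe_eq_of_memWLp hg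
    obtain ⟨δ, -, hδ, hδε⟩ := ENNReal.lt_iff_exists_real_btwn.mp hε
    obtain ⟨n, hn⟩ := Metric.denseRange_iff.mp hf g δ (ENNReal.ofReal_pos.mp hδ)
    refine ⟨n, ?_⟩
    rw [← hT, enormW_one_one_sub, dist_comm]
    exact (ENNReal.ofReal_le_ofReal hn.le).trans_lt hδε

theorem mixingOn_of_eventually_exists_dist_lt (hT : ∀ n f, ⇑((T ^ n) f) = B^[n] f)
    (hmix : ∀ f g : lp (fun _ : V => 𝕂) 1, ∀ ε > 0,
      ∀ᶠ n in atTop, ∃ h, dist h f < ε ∧ dist ((T ^ n) h) g < ε) :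
    MixingOn B (MemWLp (fun _ => (1 : 𝕂)) 1) (enormW (fun _ => (1 : 𝕂)) 1) := by
  intro _ _ hf hg ε hε
  obtain ⟨f, rfl⟩ := exists_lp_coe_eq_of_memWLp hf
  obtain ⟨g, rfl⟩ := exists_lp_coe_eq_of_memWLp hg
  obtain ⟨δ, -, hδ, hδε⟩ := ENNReal.lt_iff_exists_real_btwn.mp hε
  obtain ⟨N, hN⟩ := eventually_atTop.mp (hmix f g δ (ENNReal.ofReal_pos.mp hδ))
  refine ⟨N, fun n hn => ?_⟩
  obtain ⟨h, hhf, hhg⟩ := hN n hn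
  refine ⟨h, (memWLp_one_one_iff h).mpr h.2, ?_, ?_⟩
  · rw [enormW_one_one_sub]
    exact (ENNReal.ofReal_le_ofReal hhf.le).trans_lt hδε
  · rw [← hT, enormW_one_one_sub]
    exact (ENNReal.ofReal_le_ofReal hhg.le).trans_lt hδε

end Transfer

theorem stmt15_general {V : Type*} [Countable V] {𝕂 : Type*} [RCLike 𝕂] (t : DirTree V)
    (hroot : t.Rooted) (hleafless : t.Leafless) (c : 𝕂) :
    ((BoundedOn (t.bshift (fun _ => c)) (enormW (fun _ => (1 : 𝕂)) 1) ∧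
        HypercyclicOn (t.bshift (fun _ => c)) (MemWLp (fun _ => (1 : 𝕂)) 1)
          (enormW (fun _ => (1 : 𝕂)) 1)) ↔ 1 < ‖c‖) ∧
    (1 < ‖c‖ →
      MixingOn (t.bshift (fun _ => c)) (MemWLp (fun _ => (1 : 𝕂)) 1)
        (enormW (fun _ => (1 : 𝕂)) 1)) := by
  have hbounded : BoundedOn (t.bshift (fun _ => c)) (enormW (fun _ => (1 : 𝕂)) 1) :=
    ⟨‖c‖ₑ, enorm_ne_top, fun f => by
      simpa only [enormW_one_one] using t.tsum_enorm_bshift_const_le c f⟩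
  have hhyp := hypercyclicOn_iff_exists_denseRange (t.coe_bshiftCLM_pow_apply c)
  refine ⟨⟨fun ⟨_, h⟩ => ?_, fun hc => ⟨hbounded, hhyp.mpr ?_⟩⟩, fun hc => ?_⟩
  · obtain ⟨f, hf⟩ := hhyp.mp h
    obtain ⟨r, -⟩ := hroot
    have : Nonempty V := ⟨r⟩
    have := lp.nontrivial_of_nonempty (α := V) (E := 𝕂) 1
    by_contra! hc
    exact not_denseRange_pow_apply_of_norm_le_one ((t.norm_bshiftCLM_le c).trans hc) f hf
  · exact t.exists_denseRange_bshiftCLM_pow_apply hroot hleafless hc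
  · exact mixingOn_of_eventually_exists_dist_lt (t.coe_bshiftCLM_pow_apply c)
      fun f g ε hε => t.eventually_exists_dist_bshiftCLM_pow_apply_lt hroot hleafless hc f g hε

/-- for a rooted leafless directed tree, the Rolewicz operator `λB` is a
bounded hypercyclic operator on `ℓ¹(V)` iff `|λ| > 1`, and in that case it is mixing. -/
theorem stmt15 {V : Type*} [Countable V] {𝕂 : Type*} [RCLike 𝕂] (t : DirTree V)
    (hroot : t.Rooted) (hleafless : t.Leafless) (c : 𝕂) (hc : c ≠ 0) :
    ((BoundedOn (t.bshift (fun _ => c)) (enormW (fun _ => (1 : 𝕂)) 1) ∧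
        HypercyclicOn (t.bshift (fun _ => c)) (MemWLp (fun _ => (1 : 𝕂)) 1)
          (enormW (fun _ => (1 : 𝕂)) 1)) ↔ 1 < ‖c‖) ∧
    (1 < ‖c‖ →
      MixingOn (t.bshift (fun _ => c)) (MemWLp (fun _ => (1 : 𝕂)) 1)
        (enormW (fun _ => (1 : 𝕂)) 1)) :=
  stmt15_general t hroot hleafless c
end
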